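/- arXiv:2301.05288 — 5 statements merged into one kernel-verified Lean document; each statement's English description precedes it below -/
import Mathlib

section
/- Suppose c > 24 and α₁, α₂ ∈ [0,1] satisfy 0.2α₁ + 0.8α₂ = 1/3, and set q₋₁ = 0.8α₁ + 0.2α₂. Then for all q̃₋₁, q̃₁ ∈ [0,1] with χ(q̃₋₁) = χ(q₋₁), one has rA(0, 1, q̃₋₁, q̃₁) > rA(α₁, α₂, q₋₁, 1/3). That is, when the Bayes-consistent belief after common observation z = 1 equals the threshold value 1/3, Alice's deviation to the pure strategy (α₁, α₂) = (0, 1) strictly improves her payoff, uniformly over nearby beliefs. -/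
/-!
Deviating to `(0, 1)` earns at least `c + 0.3`, whatever the beliefs. On the other side, the
Bayes constraint makes the `z = 1` bonus of the candidate strategy vanish, and every bonus
`(3q - 1) χ(q)` is nonpositive, so the candidate earns at most its base payoff `rABase`, the
part of `rA` without bonuses. Since `α₂ = 5/12 - α₁/4`, that base payoff falls short of
`c + 0.3` once `c > 24`.
-/

/-- The threshold function χ(q) = 1 if q ≤ 1/3 and 0 otherwise. -/
noncomputable def chi (q : ℝ) : ℝ := if q ≤ 1/3 then 1 else 0

/-- Alice's payoff in the augmented stage-game (p = 0.2). -/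
noncomputable def rA (c α₁ α₂ qm qp : ℝ) : ℝ :=
  0.5 * c * (1 - α₁ + α₂) + 0.5 * (2 - α₁ - α₂)
    + 0.5 * (3 * (0.8 * α₁ + 0.2 * α₂) - 1) * chi qm
    + 0.5 * (3 * (0.2 * α₁ + 0.8 * α₂) - 1) * chi qp

noncomputable def rABase (c α₁ α₂ : ℝ) : ℝ :=
  0.5 * c * (1 - α₁ + α₂) + 0.5 * (2 - α₁ - α₂)

lemma chi_nonneg (q : ℝ) : 0 ≤ chi q := by
  unfold chi; split_ifs <;> norm_num

lemma chi_le_one (q : ℝ) : chi q ≤ 1 := by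
  unfold chi; split_ifs <;> norm_num

lemma chi_one_third : chi (1/3) = 1 := if_pos le_rfl

lemma mul_chi_nonpos (q : ℝ) : (3 * q - 1) * chi q ≤ 0 := by
  unfold chi
  split_ifs with hq
  · linarith
  · rw [mul_zero]

lemma add_le_rA_zero_one (c qm qp : ℝ) : c + 0.3 ≤ rA c 0 1 qm qp := by
  have := chi_le_one qm
  have := chi_nonneg qp
  unfold rA
  linarith

lemma rA_le_rABase_of_threshold {c α₁ α₂ : ℝ} (hq : 0.2 * α₁ + 0.8 * α₂ = 1/3) :
    rA c α₁ α₂ (0.8 * α₁ + 0.2 * α₂) (1/3) ≤ rABase c α₁ α₂ := by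
  have := mul_chi_nonpos (0.8 * α₁ + 0.2 * α₂)
  unfold rA rABase
  rw [hq, chi_one_third]
  linarith

lemma rABase_lt_of_threshold {c α₁ α₂ : ℝ} (hc : 24 < c) (hα₁ : 0 ≤ α₁)
    (hq : 0.2 * α₁ + 0.8 * α₂ = 1/3) :
    rABase c α₁ α₂ < c + 0.3 := by
  have hα₂ : α₂ = 5/12 - α₁ / 4 := by linarith
  subst hα₂
  unfold rABase
  nlinarith [mul_nonneg (by linarith : (0:ℝ) ≤ c) hα₁]

theorem deviation_improves_zp_general (c α₁ α₂ : ℝ) (hc : 24 < c)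
    (h₁ : α₁ ∈ Set.Icc (0:ℝ) 1)
    (hq : 0.2 * α₁ + 0.8 * α₂ = 1/3) :
    ∀ qm' ∈ Set.Icc (0:ℝ) 1, ∀ qp' ∈ Set.Icc (0:ℝ) 1,
      chi qm' = chi (0.8 * α₁ + 0.2 * α₂) →
      rA c 0 1 qm' qp' > rA c α₁ α₂ (0.8 * α₁ + 0.2 * α₂) (1/3) := by
  intro qm' _ qp' _ _
  calc rA c α₁ α₂ (0.8 * α₁ + 0.2 * α₂) (1/3)
      ≤ rABase c α₁ α₂ := rA_le_rABase_of_threshold hq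
    _ < c + 0.3 := rABase_lt_of_threshold hc h₁.1 hq
    _ ≤ rA c 0 1 qm' qp' := add_le_rA_zero_one c qm' qp'

/-- If c > 24 and the Bayes-consistent belief after z = 1 equals 1/3, Alice's
deviation to (0,1) strictly improves her payoff, uniformly over nearby beliefs. -/
theorem deviation_improves_zp (c α₁ α₂ : ℝ) (hc : 24 < c)
    (h₁ : α₁ ∈ Set.Icc (0:ℝ) 1) (h₂ : α₂ ∈ Set.Icc (0:ℝ) 1)
    (hq : 0.2 * α₁ + 0.8 * α₂ = 1/3) :
    ∀ qm' ∈ Set.Icc (0:ℝ) 1, ∀ qp' ∈ Set.Icc (0:ℝ) 1,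
      chi qm' = chi (0.8 * α₁ + 0.2 * α₂) →
      rA c 0 1 qm' qp' > rA c α₁ α₂ (0.8 * α₁ + 0.2 * α₂) (1/3) :=
  deviation_improves_zp_general c α₁ α₂ hc h₁ hq
end

section
/- Suppose c > 24. Then for all q̃₋₁, q̃₁ ∈ [0,1], one has rA(0, 1, q̃₋₁, q̃₁) > rA(1/3, 1/3, 1/3, 1/3). That is, at the unique strategy (α₁, α₂) = (1/3, 1/3) whose Bayes-consistent beliefs after both common observations equal the threshold value 1/3, Alice's deviation to the pure strategy (0, 1) strictly improves her payoff, uniformly over all beliefs. -/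
lemma rA_one_third_one_third (c qm qp : ℝ) : rA c (1/3) (1/3) qm qp = c / 2 + 2 / 3 := by
  unfold rA; ring

lemma rA_zero_one (c qm qp : ℝ) : rA c 0 1 qm qp = c + 1 / 2 - chi qm / 5 + 7 / 10 * chi qp := by
  unfold rA; ring

lemma add_three_tenths_le_rA_zero_one (c qm qp : ℝ) : c + 3 / 10 ≤ rA c 0 1 qm qp := by
  rw [rA_zero_one]
  linarith [chi_le_one qm, chi_nonneg qp]

lemma rA_one_third_one_third_lt_rA_zero_one {c : ℝ} (hc : 11 / 15 < c) (qm qp qm' qp' : ℝ) :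
    rA c (1/3) (1/3) qm qp < rA c 0 1 qm' qp' := by
  rw [rA_one_third_one_third]
  linarith [add_three_tenths_le_rA_zero_one c qm' qp']

/-- If c > 24, Alice's deviation from (1/3, 1/3) (whose Bayes-consistent beliefs
both equal 1/3) to the pure strategy (0,1) strictly improves her payoff,
uniformly over all beliefs. -/
theorem deviation_improves_both (c : ℝ) (hc : 24 < c) :
    ∀ qm' ∈ Set.Icc (0:ℝ) 1, ∀ qp' ∈ Set.Icc (0:ℝ) 1,
      rA c 0 1 qm' qp' > rA c (1/3) (1/3) (1/3) (1/3) := by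
  intro qm' _ qp' _
  exact rA_one_third_one_third_lt_rA_zero_one (by linarith) _ _ qm' qp'
end

section
/- If c > 24, then there exist α₁, α₂ ∈ [0,1] such that, with q₋₁ = 0.8α₁ + 0.2α₂ and q₁ = 0.2α₁ + 0.8α₂, the value α₁ maximizes a ↦ rA₋(a, q₋₁, q₁) over [0,1] and the value α₂ maximizes a ↦ rA₊(a, q₋₁, q₁) over [0,1]. (Existence of a sufficient-information-based Bayesian Nash equilibrium strategy at stage 1 of the two-stage example with hidden actions.) -/
/-- Alice's expected stage-1 payoff conditional on initial state −1 (p = 0.2). -/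
noncomputable def rAm (c α qm qp : ℝ) : ℝ :=
  (1 + c) * (1 - α) + (3 * α - 1) * (0.8 * chi qm + 0.2 * chi qp)

/-- Alice's expected stage-1 payoff conditional on initial state +1 (p = 0.2). -/
noncomputable def rAp (c α qm qp : ℝ) : ℝ :=
  1 + (c - 1) * α + (3 * α - 1) * (0.8 * chi qp + 0.2 * chi qm)

lemma chi_mix_nonneg (x y : ℝ) : 0 ≤ 0.8 * chi x + 0.2 * chi y := by
  linarith [chi_nonneg x, chi_nonneg y]

lemma chi_mix_le_one (x y : ℝ) : 0.8 * chi x + 0.2 * chi y ≤ 1 := by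
  linarith [chi_le_one x, chi_le_one y]

lemma rAm_le_rAm_zero {c a : ℝ} (qm qp : ℝ) (hc : 2 ≤ c) (ha : 0 ≤ a) :
    rAm c a qm qp ≤ rAm c 0 qm qp := by
  have hw := chi_mix_le_one qm qp
  unfold rAm
  nlinarith

lemma rAp_le_rAp_one {c a : ℝ} (qm qp : ℝ) (hc : 1 ≤ c) (ha : a ≤ 1) :
    rAp c a qm qp ≤ rAp c 1 qm qp := by
  have hw := chi_mix_nonneg qp qm
  unfold rAp
  nlinarith

/-- If c > 24, there exists a SIB-BNE strategy at stage 1: α₁, α₂ ∈ [0,1] such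
that, with the Bayes-consistent beliefs q₋₁ = 0.8α₁+0.2α₂ and q₁ = 0.2α₁+0.8α₂,
α₁ maximizes rA₋(·, q₋₁, q₁) over [0,1] and α₂ maximizes rA₊(·, q₋₁, q₁) over [0,1]. -/
theorem sib_bne_exists (c : ℝ) (hc : 24 < c) :
    ∃ α₁ ∈ Set.Icc (0:ℝ) 1, ∃ α₂ ∈ Set.Icc (0:ℝ) 1,
      (∀ a ∈ Set.Icc (0:ℝ) 1,
        rAm c a (0.8 * α₁ + 0.2 * α₂) (0.2 * α₁ + 0.8 * α₂) ≤
        rAm c α₁ (0.8 * α₁ + 0.2 * α₂) (0.2 * α₁ + 0.8 * α₂)) ∧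
      (∀ a ∈ Set.Icc (0:ℝ) 1,
        rAp c a (0.8 * α₁ + 0.2 * α₂) (0.2 * α₁ + 0.8 * α₂) ≤
        rAp c α₂ (0.8 * α₁ + 0.2 * α₂) (0.2 * α₁ + 0.8 * α₂)) :=
  ⟨0, ⟨le_rfl, zero_le_one⟩, 1, ⟨zero_le_one, le_rfl⟩,
    fun _ ha => rAm_le_rAm_zero _ _ (by linarith) ha.1,
    fun _ ha => rAp_le_rAp_one _ _ (by linarith) ha.2⟩
end

section
/- If c > 24, then there exist α₁, α₂, q₋₁, q₁ ∈ [0,1] such that rA(α₁, α₂, q₋₁, q₁) ≥ rA(α₁', α₂', q₋₁, q₁) for all α₁', α₂' ∈ [0,1], and r0(α₁, α₂, q₋₁, q₁) ≥ r0(α₁, α₂, q₋₁', q₁') for all q₋₁', q₁' ∈ [0,1]. (Existence of a Nash equilibrium of the augmented stage-game Ĝ₁ between Alice and the belief-selecting agent 0.) -/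
/-- Agent 0's utility in the augmented stage-game (p = 0.2). -/
noncomputable def r0 (α₁ α₂ qm qp : ℝ) : ℝ :=
  -(qm - 0.8 * α₁ - 0.2 * α₂)^2 - (qp - 0.2 * α₁ - 0.8 * α₂)^2

/-! Agent 0 is rewarded for guessing the two expected signals, so it best-responds by naming them;
if Alice plays `(α₁, α₂) = (0, 1)` these are `q₋₁ = 0.2 ≤ 1/3 < 0.8 = q₁`. Against these beliefs
Alice's payoff is affine in `(α₁, α₂)`, decreasing in `α₁` and increasing in `α₂` once `c ≥ 7/5`,
so `(0, 1)` is her best response. -/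

theorem r0_le_of_expected {α₁ α₂ qm qp : ℝ} (hqm : qm = 0.8 * α₁ + 0.2 * α₂)
    (hqp : qp = 0.2 * α₁ + 0.8 * α₂) (qm' qp' : ℝ) :
    r0 α₁ α₂ qm' qp' ≤ r0 α₁ α₂ qm qp := by
  have hzero : r0 α₁ α₂ qm qp = 0 := by
    simp only [r0, hqm, hqp]
    ring
  rw [hzero, r0]
  linarith [sq_nonneg (qm' - 0.8 * α₁ - 0.2 * α₂), sq_nonneg (qp' - 0.2 * α₁ - 0.8 * α₂)]

theorem rA_of_chi {c qm qp : ℝ} (hqm : qm ≤ 1 / 3) (hqp : 1 / 3 < qp) (α₁ α₂ : ℝ) :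
    rA c α₁ α₂ qm qp = (c + 1) / 2 + (7 / 10 - c / 2) * α₁ + (c / 2 - 1 / 5) * α₂ := by
  simp only [rA, chi, if_pos hqm, if_neg (not_le.mpr hqp)]
  ring

theorem rA_le_rA_zero_one {c qm qp α₁ α₂ : ℝ} (hc : 7 / 5 ≤ c) (hqm : qm ≤ 1 / 3)
    (hqp : 1 / 3 < qp) (hα₁ : α₁ ∈ Set.Icc (0 : ℝ) 1) (hα₂ : α₂ ∈ Set.Icc (0 : ℝ) 1) :
    rA c α₁ α₂ qm qp ≤ rA c 0 1 qm qp := by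
  rw [rA_of_chi hqm hqp, rA_of_chi hqm hqp]
  have hdec : (7 / 10 - c / 2) * α₁ ≤ 0 := mul_nonpos_of_nonpos_of_nonneg (by linarith) hα₁.1
  have hinc : (c / 2 - 1 / 5) * α₂ ≤ c / 2 - 1 / 5 := mul_le_of_le_one_right (by linarith) hα₂.2
  linarith

/-- If c > 24, the augmented stage-game Ĝ₁ between Alice and the
belief-selecting agent 0 has a Nash equilibrium. -/
theorem augmented_game_nash_exists (c : ℝ) (hc : 24 < c) :
    ∃ α₁ ∈ Set.Icc (0:ℝ) 1, ∃ α₂ ∈ Set.Icc (0:ℝ) 1,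
    ∃ qm ∈ Set.Icc (0:ℝ) 1, ∃ qp ∈ Set.Icc (0:ℝ) 1,
      (∀ α₁' ∈ Set.Icc (0:ℝ) 1, ∀ α₂' ∈ Set.Icc (0:ℝ) 1,
        rA c α₁' α₂' qm qp ≤ rA c α₁ α₂ qm qp) ∧
      (∀ qm' ∈ Set.Icc (0:ℝ) 1, ∀ qp' ∈ Set.Icc (0:ℝ) 1,
        r0 α₁ α₂ qm' qp' ≤ r0 α₁ α₂ qm qp) := by
  refine ⟨0, by norm_num, 1, by norm_num, 0.2, by norm_num, 0.8, by norm_num, ?_, ?_⟩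
  · intro α₁' hα₁' α₂' hα₂'
    exact rA_le_rA_zero_one (by linarith) (by norm_num) (by norm_num) hα₁' hα₂'
  · intro qm' _ qp' _
    exact r0_le_of_expected (by norm_num) (by norm_num) qm' qp'
end

section
/- Suppose α₁, α₂, q₋₁, q₁ ∈ [0,1] form a Nash equilibrium of the augmented stage-game, i.e. rA(α₁, α₂, q₋₁, q₁) ≥ rA(α₁', α₂', q₋₁, q₁) for all α₁', α₂' ∈ [0,1] and r0(α₁, α₂, q₋₁, q₁) ≥ r0(α₁, α₂, q₋₁', q₁') for all q₋₁', q₁' ∈ [0,1]. Then q₋₁ = 0.8α₁ + 0.2α₂, q₁ = 0.2α₁ + 0.8α₂, α₁ maximizes a ↦ rA₋(a, q₋₁, q₁) over [0,1], and α₂ maximizes a ↦ rA₊(a, q₋₁, q₁) over [0,1]. -/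
/-!
Alice's augmented payoff is the average `(rA₋(α₁) + rA₊(α₂)) / 2` of two functions of separate
variables, so a joint maximizer over `[0,1]²` maximizes each summand on its own. Agent 0's utility
is a negative squared distance that vanishes exactly at the Bayes-consistent beliefs, which lie in
`[0,1]` as convex combinations of `α₁` and `α₂`; so agent 0's best response is those beliefs.
-/

theorem le_of_forall_add_le_left {α β M : Type*} [AddCommMonoid M] [PartialOrder M]
    [IsOrderedCancelAddMonoid M] {f : α → M} {g : β → M} {s : Set α} {t : Set β}
    {a₀ : α} {b₀ : β} (h : ∀ a ∈ s, ∀ b ∈ t, f a + g b ≤ f a₀ + g b₀) (hb₀ : b₀ ∈ t) :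
    ∀ a ∈ s, f a ≤ f a₀ :=
  fun a ha => le_of_add_le_add_right (h a ha b₀ hb₀)

theorem le_of_forall_add_le_right {α β M : Type*} [AddCommMonoid M] [PartialOrder M]
    [IsOrderedCancelAddMonoid M] {f : α → M} {g : β → M} {s : Set α} {t : Set β}
    {a₀ : α} {b₀ : β} (h : ∀ a ∈ s, ∀ b ∈ t, f a + g b ≤ f a₀ + g b₀) (ha₀ : a₀ ∈ s) :
    ∀ b ∈ t, g b ≤ g b₀ :=
  fun b hb => le_of_add_le_add_left (h a₀ ha₀ b hb)

theorem two_mul_rA (c α₁ α₂ qm qp : ℝ) :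
    2 * rA c α₁ α₂ qm qp = rAm c α₁ qm qp + rAp c α₂ qm qp := by
  simp only [rA, rAm, rAp]
  ring

theorem r0_nonpos (α₁ α₂ qm qp : ℝ) : r0 α₁ α₂ qm qp ≤ 0 := by
  unfold r0
  nlinarith [sq_nonneg (qm - 0.8 * α₁ - 0.2 * α₂), sq_nonneg (qp - 0.2 * α₁ - 0.8 * α₂)]

theorem r0_eq_zero_iff {α₁ α₂ qm qp : ℝ} :
    r0 α₁ α₂ qm qp = 0 ↔ qm = 0.8 * α₁ + 0.2 * α₂ ∧ qp = 0.2 * α₁ + 0.8 * α₂ := by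
  have hm := sq_nonneg (qm - 0.8 * α₁ - 0.2 * α₂)
  have hp := sq_nonneg (qp - 0.2 * α₁ - 0.8 * α₂)
  unfold r0
  constructor
  · intro h
    constructor
    · nlinarith
    · nlinarith
  · rintro ⟨rfl, rfl⟩
    ring

theorem bayes_mem_Icc {α₁ α₂ : ℝ} (h₁ : α₁ ∈ Set.Icc (0:ℝ) 1) (h₂ : α₂ ∈ Set.Icc (0:ℝ) 1)
    {w : ℝ} (hw : w ∈ Set.Icc (0:ℝ) 1) : w * α₁ + (1 - w) * α₂ ∈ Set.Icc (0:ℝ) 1 :=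
  convex_Icc 0 1 h₁ h₂ hw.1 (sub_nonneg.2 hw.2) (add_sub_cancel w 1)

theorem r0_best_response {α₁ α₂ qm qp : ℝ}
    (h₁ : α₁ ∈ Set.Icc (0:ℝ) 1) (h₂ : α₂ ∈ Set.Icc (0:ℝ) 1)
    (h0 : ∀ qm' ∈ Set.Icc (0:ℝ) 1, ∀ qp' ∈ Set.Icc (0:ℝ) 1,
      r0 α₁ α₂ qm' qp' ≤ r0 α₁ α₂ qm qp) :
    qm = 0.8 * α₁ + 0.2 * α₂ ∧ qp = 0.2 * α₁ + 0.8 * α₂ := by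
  have hm := bayes_mem_Icc h₁ h₂ (w := 0.8) (by norm_num)
  have hp := bayes_mem_Icc h₁ h₂ (w := 0.2) (by norm_num)
  norm_num at hm hp
  have hbayes := h0 _ hm _ hp
  rw [r0_eq_zero_iff.2 ⟨by norm_num, by norm_num⟩] at hbayes
  exact r0_eq_zero_iff.1 (le_antisymm (r0_nonpos _ _ _ _) hbayes)

theorem nash_gives_sib_bne_general (c α₁ α₂ qm qp : ℝ)
    (h₁ : α₁ ∈ Set.Icc (0:ℝ) 1) (h₂ : α₂ ∈ Set.Icc (0:ℝ) 1)
    (hA : ∀ α₁' ∈ Set.Icc (0:ℝ) 1, ∀ α₂' ∈ Set.Icc (0:ℝ) 1,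
      rA c α₁' α₂' qm qp ≤ rA c α₁ α₂ qm qp)
    (h0 : ∀ qm' ∈ Set.Icc (0:ℝ) 1, ∀ qp' ∈ Set.Icc (0:ℝ) 1,
      r0 α₁ α₂ qm' qp' ≤ r0 α₁ α₂ qm qp) :
    qm = 0.8 * α₁ + 0.2 * α₂ ∧ qp = 0.2 * α₁ + 0.8 * α₂ ∧
    (∀ a ∈ Set.Icc (0:ℝ) 1, rAm c a qm qp ≤ rAm c α₁ qm qp) ∧
    (∀ a ∈ Set.Icc (0:ℝ) 1, rAp c a qm qp ≤ rAp c α₂ qm qp) := by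
  have hsplit : ∀ a ∈ Set.Icc (0:ℝ) 1, ∀ b ∈ Set.Icc (0:ℝ) 1,
      rAm c a qm qp + rAp c b qm qp ≤ rAm c α₁ qm qp + rAp c α₂ qm qp := by
    intro a ha b hb
    rw [← two_mul_rA, ← two_mul_rA]
    linarith [hA a ha b hb]
  obtain ⟨hqm, hqp⟩ := r0_best_response h₁ h₂ h0
  exact ⟨hqm, hqp, le_of_forall_add_le_left hsplit h₂, le_of_forall_add_le_right hsplit h₁⟩

/-- Any Nash equilibrium of the augmented stage-game has Bayes-consistent beliefs,
and Alice's components separately maximize rA₋ and rA₊ over [0,1]. -/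
theorem nash_gives_sib_bne (c α₁ α₂ qm qp : ℝ)
    (h₁ : α₁ ∈ Set.Icc (0:ℝ) 1) (h₂ : α₂ ∈ Set.Icc (0:ℝ) 1)
    (hqm : qm ∈ Set.Icc (0:ℝ) 1) (hqp : qp ∈ Set.Icc (0:ℝ) 1)
    (hA : ∀ α₁' ∈ Set.Icc (0:ℝ) 1, ∀ α₂' ∈ Set.Icc (0:ℝ) 1,
      rA c α₁' α₂' qm qp ≤ rA c α₁ α₂ qm qp)
    (h0 : ∀ qm' ∈ Set.Icc (0:ℝ) 1, ∀ qp' ∈ Set.Icc (0:ℝ) 1,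
      r0 α₁ α₂ qm' qp' ≤ r0 α₁ α₂ qm qp) :
    qm = 0.8 * α₁ + 0.2 * α₂ ∧ qp = 0.2 * α₁ + 0.8 * α₂ ∧
    (∀ a ∈ Set.Icc (0:ℝ) 1, rAm c a qm qp ≤ rAm c α₁ qm qp) ∧
    (∀ a ∈ Set.Icc (0:ℝ) 1, rAp c a qm qp ≤ rAp c α₂ qm qp) :=
  nash_gives_sib_bne_general c α₁ α₂ qm qp h₁ h₂ hA h0
end
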